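/- Let ψ : ℝ² × (0,∞) → ℝ be defined by ψ(η₁,η₂,η₃) = ½(η₁² + η₂²) + ¼ η₃ ln η₃. Then: (a) the matrix of second partial derivatives of ψ at η is diag(1, 1, 1/(4η₃)), and for all x, y ∈ ℝ, z > 0, with J = diag(1,1,2z) the Jacobian of (x,y,z) ↦ (x, y, z²), one has Jᵀ · Hess ψ(x, y, z²) · J equal to the 3×3 identity matrix; (b) ∇ψ(η) = (η₁, η₂, ¼ ln η₃ + ¼) and ⟨∇ψ(η), η⟩ − ψ(η) = ½(η₁² + η₂²) + ¼η₃. (This is the Smorodinski–Winternitz system (IIa), whose Hessian structure is not self-dual.) -/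

import Mathlib

/-! The potential splits as a sum of one-variable functions, `ψ = q(η₁) + q(η₂) + e(η₃)` with
`q s = s²/2` and `e s = s log s / 4`, so all mixed partials vanish and the Hessian is
`diag(q'', q'', e'') = diag(1, 1, 1/(4η₃))`. Pulling back along `(x, y, z) ↦ (x, y, z²)` multiplies
the last entry by `(2z)²`, giving the identity. The Legendre transform is then a direct
computation from `e'(s) = (log s + 1)/4`. -/

open Real Set Matrix

/-- The Hessian potential of the Smorodinski–Winternitz system (IIa)
in its Hessian coordinates. -/
noncomputable def ψ (a b c : ℝ) : ℝ := (a ^ 2 + b ^ 2) / 2 + c * log c / 4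

/-- Partial derivative with respect to the first variable. -/
noncomputable def d1 (f : ℝ → ℝ → ℝ → ℝ) (a b c : ℝ) : ℝ := deriv (fun s => f s b c) a

/-- Partial derivative with respect to the second variable. -/
noncomputable def d2 (f : ℝ → ℝ → ℝ → ℝ) (a b c : ℝ) : ℝ := deriv (fun s => f a s c) b

/-- Partial derivative with respect to the third variable. -/
noncomputable def d3 (f : ℝ → ℝ → ℝ → ℝ) (a b c : ℝ) : ℝ := deriv (fun s => f a b s) c

/-- The matrix of second partial derivatives of a function of three variables. -/
noncomputable def Hess (f : ℝ → ℝ → ℝ → ℝ) (a b c : ℝ) : Matrix (Fin 3) (Fin 3) ℝ :=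
  !![d1 (d1 f) a b c, d1 (d2 f) a b c, d1 (d3 f) a b c;
     d2 (d1 f) a b c, d2 (d2 f) a b c, d2 (d3 f) a b c;
     d3 (d1 f) a b c, d3 (d2 f) a b c, d3 (d3 f) a b c]

/-- The Jacobian matrix of the coordinate change `(x,y,z) ↦ (x, y, z²)`. -/
noncomputable def J (z : ℝ) : Matrix (Fin 3) (Fin 3) ℝ :=
  !![1, 0, 0; 0, 1, 0; 0, 0, 2 * z]

section Separable

variable (u v w : ℝ → ℝ)

lemma d1_add_add : d1 (fun a b c => u a + v b + w c) = fun a _ _ => deriv u a := by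
  ext a b c
  simp only [d1, deriv_add_const]

lemma d2_add_add : d2 (fun a b c => u a + v b + w c) = fun _ b _ => deriv v b := by
  ext a b c
  simp only [d2, deriv_add_const, deriv_const_add]

lemma d3_add_add : d3 (fun a b c => u a + v b + w c) = fun _ _ c => deriv w c := by
  ext a b c
  simp only [d3, deriv_const_add]

lemma Hess_add_add (a b c : ℝ) :
    Hess (fun a b c => u a + v b + w c) a b c
      = diagonal ![deriv^[2] u a, deriv^[2] v b, deriv^[2] w c] := by
  rw [Hess, d1_add_add, d2_add_add, d3_add_add, diagonal_vec3]
  simp [d1, d2, d3]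

end Separable

lemma ψ_eq_add_add : ψ = fun a b c => a ^ 2 / 2 + b ^ 2 / 2 + c * log c / 4 := by
  ext a b c
  rw [ψ, add_div]

lemma deriv_sq_div_two : deriv (fun s : ℝ => s ^ 2 / 2) = id := by
  ext s
  simp

lemma deriv_mul_log_div_four {s : ℝ} (hs : s ≠ 0) :
    deriv (fun s => s * log s / 4) s = (1 / 4) * log s + 1 / 4 := by
  rw [deriv_div_const, deriv_mul_log hs]
  ring

-- Valid for every `s`: `log` is `log |·|` for `s < 0`, and at `s = 0` both sides are junk `0`.
lemma deriv2_mul_log_div_four (s : ℝ) :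
    deriv^[2] (fun s => s * log s / 4) s = 1 / (4 * s) := by
  have h : deriv (fun s => s * log s / 4) = fun s => deriv (fun s => s * log s) s / 4 := by
    ext t
    exact deriv_div_const _
  have h2 : deriv (deriv fun s => s * log s) s = s⁻¹ := deriv2_mul_log s
  rw [Function.iterate_succ_apply, Function.iterate_one, h, deriv_div_const, h2]
  ring

lemma Hess_ψ (a b c : ℝ) : Hess ψ a b c = diagonal ![1, 1, 1 / (4 * c)] := by
  rw [ψ_eq_add_add, Hess_add_add, deriv2_mul_log_div_four]
  simp [deriv_sq_div_two]

lemma d1_ψ (a b c : ℝ) : d1 ψ a b c = a := by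
  simp only [ψ_eq_add_add, d1_add_add, deriv_sq_div_two, id]

lemma d2_ψ (a b c : ℝ) : d2 ψ a b c = b := by
  simp only [ψ_eq_add_add, d2_add_add, deriv_sq_div_two, id]

lemma d3_ψ (a b : ℝ) {c : ℝ} (hc : c ≠ 0) : d3 ψ a b c = (1 / 4) * log c + 1 / 4 := by
  simp only [ψ_eq_add_add, d3_add_add, deriv_mul_log_div_four hc]

lemma J_eq_diagonal (z : ℝ) : J z = diagonal ![1, 1, 2 * z] :=
  (diagonal_vec3 _ _ _).symm

lemma J_transpose_mul_Hess_ψ_mul_J (x y : ℝ) {z : ℝ} (hz : z ≠ 0) :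
    (J z)ᵀ * Hess ψ x y (z ^ 2) * J z = 1 := by
  rw [J_eq_diagonal, Hess_ψ, diagonal_transpose, diagonal_mul_diagonal, diagonal_mul_diagonal,
    ← diagonal_one]
  congr 1
  ext i
  fin_cases i <;> simp
  field_simp
  norm_num

/-- Smorodinski–Winternitz system (IIa), `ψ(η) = ½(η₁² + η₂²) + ¼η₃ ln η₃`:
(a) `Hess ψ(η) = diag(1, 1, 1/(4η₃))` and `(x, y, z²)` are Hessian coordinates
for Euclidean 3-space (`Jᵀ · Hess ψ(x,y,z²) · J = I₃`);
(b) the dual Hessian coordinates are `∇ψ(η) = (η₁, η₂, ¼ ln η₃ + ¼)` and the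
dual Hessian potential is `⟨∇ψ(η), η⟩ − ψ(η) = ½(η₁² + η₂²) + ¼η₃`. -/
theorem sw_IIa_hessian_and_dual :
    (∀ a b c : ℝ, 0 < c →
      Hess ψ a b c = !![1, 0, 0; 0, 1, 0; 0, 0, 1 / (4 * c)]) ∧
    (∀ x y z : ℝ, 0 < z →
      (J z)ᵀ * Hess ψ x y (z ^ 2) * J z = 1) ∧
    ∀ a b c : ℝ, 0 < c →
      d1 ψ a b c = a ∧
      d2 ψ a b c = b ∧
      d3 ψ a b c = (1 / 4) * log c + 1 / 4 ∧
      d1 ψ a b c * a + d2 ψ a b c * b + d3 ψ a b c * c - ψ a b c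
        = (a ^ 2 + b ^ 2) / 2 + c / 4 := by
  refine ⟨fun a b c _ => by rw [Hess_ψ, diagonal_vec3],
    fun x y z hz => J_transpose_mul_Hess_ψ_mul_J x y hz.ne', fun a b c hc => ?_⟩
  refine ⟨d1_ψ a b c, d2_ψ a b c, d3_ψ a b hc.ne', ?_⟩
  rw [d1_ψ, d2_ψ, d3_ψ a b hc.ne', ψ]
  ring
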